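/- Let (C,∂) be a finitely generated free chain complex over R = F₂[U,V,U⁻¹,V⁻¹] with basis B, and let Φ_B and Ψ_B be the formal derivatives of ∂ with respect to U and V respectively. Then Φ_B ∘ Ψ_B + Ψ_B ∘ Φ_B = ∂ ∘ K + K ∘ ∂ for some R-linear map K; i.e., Φ_B and Ψ_B commute up to R-equivariant chain homotopy. Moreover K can be taken to be the formal derivative with respect to V of the matrix of Φ_B. -/

import Mathlib

open Finsupp

noncomputable section

abbrev F2 : Type := ZMod 2

/-- The Laurent polynomial ring `F₂[U,V,U⁻¹,V⁻¹]`, realized as the monoid algebra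
of `ℤ × ℤ` over `F₂`; `U` corresponds to `(1,0)` and `V` to `(0,1)`. -/
abbrev R2 : Type := AddMonoidAlgebra F2 (ℤ × ℤ)

/-- Formal derivative of a Laurent polynomial with respect to `U`. -/
def dU (f : R2) : R2 :=
  Finsupp.sum f.coeff fun mn c => AddMonoidAlgebra.ofCoeff (Finsupp.single (mn.1 - 1, mn.2) ((mn.1 : F2) * c))

/-- Formal derivative of a Laurent polynomial with respect to `V`. -/
def dV (f : R2) : R2 :=
  Finsupp.sum f.coeff fun mn c => AddMonoidAlgebra.ofCoeff (Finsupp.single (mn.1, mn.2 - 1) ((mn.2 : F2) * c))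

/-- The `R2`-linear map `(B →₀ R2) →ₗ (B' →₀ R2)` determined by its values on
the standard basis. -/
def bmap {B B' : Type} (v : B → (B' →₀ R2)) : (B →₀ R2) →ₗ[R2] (B' →₀ R2) :=
  Finsupp.lsum R2 fun x => LinearMap.toSpanSingleton R2 _ (v x)

/-- The matrix entry `P_{x y}` of a linear map with respect to the standard bases. -/
def matOf {B B' : Type} (f : (B →₀ R2) →ₗ[R2] (B' →₀ R2)) (x : B) (y : B') : R2 :=
  f (Finsupp.single x 1) y

/-- Apply `g : R2 → R2` to each matrix entry of `f`. -/
def entrywise {B B' : Type} [Finite B'] (g : R2 → R2)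
    (f : (B →₀ R2) →ₗ[R2] (B' →₀ R2)) : (B →₀ R2) →ₗ[R2] (B' →₀ R2) :=
  bmap fun x => Finsupp.equivFunOnFinite.symm fun y => g (matOf f x y)

/-- `Φ_B`, the formal derivative of the differential with respect to `U`. -/
def PhiB {B : Type} [Finite B] (d : (B →₀ R2) →ₗ[R2] (B →₀ R2)) :
    (B →₀ R2) →ₗ[R2] (B →₀ R2) :=
  entrywise dU d

/-- `Ψ_B`, the formal derivative of the differential with respect to `V`. -/
def PsiB {B : Type} [Finite B] (d : (B →₀ R2) →ₗ[R2] (B →₀ R2)) :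
    (B →₀ R2) →ₗ[R2] (B →₀ R2) :=
  entrywise dV d

/-!
Entrywise differentiation of matrices obeys the Leibniz rule for composition, because `d/dU` and
`d/dV` are derivations of `R`. Differentiating `∂ ∘ ∂ = 0` with respect to `U` gives
`Φ ∘ ∂ + ∂ ∘ Φ = 0`; differentiating that with respect to `V` gives
`K ∘ ∂ + Φ ∘ Ψ + Ψ ∘ Φ + ∂ ∘ K = 0` with `K = d/dV Φ`, and signs do not matter in characteristic `2`.
-/

namespace AddMonoidAlgebra

variable {k G : Type*} [CommSemiring k]

/-- `dU` and `dV` are the instances with `ψ` a unit translation and `φ` a coordinate. -/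
def weightedShift (ψ : G → G) (φ : G → k) (f : AddMonoidAlgebra k G) : AddMonoidAlgebra k G :=
  Finsupp.sum f.coeff fun a c => ofCoeff (Finsupp.single (ψ a) (φ a * c))

variable (ψ : G → G) (φ : G → k)

lemma weightedShift_add (f g : AddMonoidAlgebra k G) :
    weightedShift ψ φ (f + g) = weightedShift ψ φ f + weightedShift ψ φ g := by
  unfold weightedShift
  rw [coeff_add, Finsupp.sum_add_index']
  · simp
  · intro a b c
    rw [mul_add, Finsupp.single_add, ofCoeff_add]

lemma weightedShift_zero : weightedShift ψ φ 0 = 0 := by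
  simp [weightedShift]

lemma weightedShift_single (a : G) (c : k) :
    weightedShift ψ φ (single a c) = single (ψ a) (φ a * c) := by
  unfold weightedShift
  rw [coeff_single, Finsupp.sum_single_index]
  · rfl
  · simp

variable {ψ φ}

lemma weightedShift_mul [AddCommMonoid G] (hψ : ∀ a b, ψ (a + b) = ψ a + b)
    (hφ : ∀ a b, φ (a + b) = φ a + φ b) (f g : AddMonoidAlgebra k G) :
    weightedShift ψ φ (f * g) = weightedShift ψ φ f * g + f * weightedShift ψ φ g := by
  induction f using induction_linear with
  | zero => simp [weightedShift_zero]
  | add f₁ f₂ h₁ h₂ => rw [add_mul, weightedShift_add, h₁, h₂, weightedShift_add]; ring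
  | single a r =>
    induction g using induction_linear with
    | zero => simp [weightedShift_zero]
    | add g₁ g₂ h₁ h₂ => rw [mul_add, weightedShift_add, h₁, h₂, weightedShift_add]; ring
    | single b s =>
      have hψ' : a + ψ b = ψ a + b := by rw [add_comm, ← hψ, add_comm, hψ]
      simp only [single_mul_single, weightedShift_single, hψ, hψ', ← single_add, hφ]
      ring_nf

end AddMonoidAlgebra

open AddMonoidAlgebra

lemma dU_add (f g : R2) : dU (f + g) = dU f + dU g := weightedShift_add _ _ f g

lemma dV_add (f g : R2) : dV (f + g) = dV f + dV g := weightedShift_add _ _ f g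

lemma dU_mul (f g : R2) : dU (f * g) = dU f * g + f * dU g :=
  weightedShift_mul (fun a b => by ext <;> simp; ring)
    (fun a b => by simp only [Prod.fst_add, Int.cast_add]) f g

lemma dV_mul (f g : R2) : dV (f * g) = dV f * g + f * dV g :=
  weightedShift_mul (fun a b => by ext <;> simp; ring)
    (fun a b => by simp only [Prod.snd_add, Int.cast_add]) f g

lemma R2.two_eq_zero : (2 : R2) = 0 := by
  rw [← map_ofNat (algebraMap F2 R2) 2, show (2 : F2) = 0 by decide, map_zero]

lemma R2.neg_eq_self {M : Type*} [AddCommGroup M] [Module R2 M] (x : M) : -x = x := by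
  rw [neg_eq_iff_add_eq_zero, ← two_smul R2, R2.two_eq_zero, zero_smul]

section Matrices

variable {B B' B'' : Type}

lemma matOf_ext {f g : (B →₀ R2) →ₗ[R2] (B' →₀ R2)} (h : ∀ x y, matOf f x y = matOf g x y) :
    f = g :=
  Finsupp.lhom_ext' fun x => LinearMap.ext_ring (Finsupp.ext (h x))

lemma matOf_add (f g : (B →₀ R2) →ₗ[R2] (B' →₀ R2)) (x : B) (y : B') :
    matOf (f + g) x y = matOf f x y + matOf g x y :=
  rfl

lemma matOf_entrywise [Finite B'] (D : R2 → R2) (f : (B →₀ R2) →ₗ[R2] (B' →₀ R2)) (x : B)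
    (y : B') : matOf (entrywise D f) x y = D (matOf f x y) := by
  simp [entrywise, bmap, matOf]

lemma matOf_comp [Fintype B'] (f : (B →₀ R2) →ₗ[R2] (B' →₀ R2))
    (g : (B' →₀ R2) →ₗ[R2] (B'' →₀ R2)) (x : B) (z : B'') :
    matOf (g ∘ₗ f) x z = ∑ y, matOf f x y * matOf g y z := by
  classical
  conv_lhs => rw [matOf, LinearMap.comp_apply, ← Finsupp.univ_sum_single (f (single x 1))]
  simp only [map_sum, Finsupp.finsetSum_apply]
  refine Finset.sum_congr rfl fun y _ => ?_
  rw [← Finsupp.smul_single_one, map_smul, Finsupp.smul_apply, smul_eq_mul]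
  rfl

variable {D : R2 → R2}

lemma entrywise_add [Finite B'] (hD : ∀ f g, D (f + g) = D f + D g)
    (f g : (B →₀ R2) →ₗ[R2] (B' →₀ R2)) :
    entrywise D (f + g) = entrywise D f + entrywise D g :=
  matOf_ext fun x y => by simp only [matOf_add, matOf_entrywise, hD]

lemma entrywise_zero [Finite B'] (hD : D 0 = 0) :
    entrywise D (0 : (B →₀ R2) →ₗ[R2] (B' →₀ R2)) = 0 :=
  matOf_ext fun x y => by rw [matOf_entrywise]; exact hD

lemma entrywise_comp [Fintype B'] [Finite B''] (hD_add : ∀ f g, D (f + g) = D f + D g)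
    (hD_mul : ∀ f g, D (f * g) = D f * g + f * D g)
    (f : (B →₀ R2) →ₗ[R2] (B' →₀ R2)) (g : (B' →₀ R2) →ₗ[R2] (B'' →₀ R2)) :
    entrywise D (g ∘ₗ f) = entrywise D g ∘ₗ f + g ∘ₗ entrywise D f := by
  have hD_sum (h : B' → R2) : D (∑ y, h y) = ∑ y, D (h y) :=
    map_sum (AddMonoidHom.mk' D hD_add) h _
  refine matOf_ext fun x z => ?_
  rw [matOf_add, matOf_entrywise, matOf_comp, matOf_comp, matOf_comp, hD_sum,
    ← Finset.sum_add_distrib]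
  simp only [hD_mul, matOf_entrywise, add_comm]

end Matrices

/-- `Φ_B` and `Ψ_B` commute up to `R`-equivariant chain homotopy:
`Φ_B ∘ Ψ_B + Ψ_B ∘ Φ_B = ∂ ∘ K + K ∘ ∂` for some `R`-linear `K`, and moreover
`K` can be taken to be the formal `V`-derivative of the matrix of `Φ_B`. -/
theorem stmt2 {B : Type} [Fintype B]
    (d : (B →₀ R2) →ₗ[R2] (B →₀ R2)) (hd : d ∘ₗ d = 0) :
    ∃ K : (B →₀ R2) →ₗ[R2] (B →₀ R2),
      K = entrywise dV (PhiB d) ∧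
      PhiB d ∘ₗ PsiB d + PsiB d ∘ₗ PhiB d = d ∘ₗ K + K ∘ₗ d := by
  refine ⟨_, rfl, ?_⟩
  have hderiv := congrArg (entrywise dV ∘ entrywise dU) hd
  simp only [Function.comp_apply, entrywise_zero (D := dU) (weightedShift_zero _ _),
    entrywise_zero (D := dV) (weightedShift_zero _ _),
    entrywise_comp dU_add dU_mul, entrywise_add dV_add, entrywise_comp dV_add dV_mul] at hderiv
  have hsum : PhiB d ∘ₗ PsiB d + PsiB d ∘ₗ PhiB d +
      (d ∘ₗ entrywise dV (PhiB d) + entrywise dV (PhiB d) ∘ₗ d) = 0 := by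
    rw [← hderiv, PhiB, PsiB]; abel
  exact (eq_neg_of_add_eq_zero_left hsum).trans (R2.neg_eq_self _)

end
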